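/- arXiv:2406.14853 — 3 statements merged into one kernel-verified Lean document; each statement's English description precedes it below -/
import Mathlib

section
/- Suppose (Ψ1), (Ψ3), (Φ1), (Φ2) hold. Assume there exist sequences {ε_j}, {λ_j} ⊂ (0,∞) and {u_j} ⊂ X with ε_j → 0, λ_j → λ ∈ (0,∞), u_j ⇀ u weakly in X, and λ_j(Ψ(v) − Ψ(u_j)) − Φ'(u_j)(v − u_j) ≥ −ε_j‖v − u_j‖ for every v ∈ X and every j. Then ‖u_j − u‖ → 0, u is a critical point of I_λ, and I_λ(u) = lim_{j→∞} I_{λ_j}(u_j) ∈ ℝ. In particular, every bounded Palais–Smale sequence for I_λ at any level c ∈ ℝ has a subsequence converging strongly in X. -/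
/-!
A weakly convergent sequence is bounded, so (Φ2) applies along subsequences. Testing the
approximate criticality inequality at `v = 0` bounds `λⱼ Ψ(uⱼ)` from above, and testing it at the
weak limit `v = u` gives `limsup λⱼ Ψ(uⱼ) ≤ λ Ψ(u)`, because by (Φ2) the term `Φ'(uⱼ)(u - uⱼ)` has
nonnegative `liminf`. Sublevel sets of `Ψ` are closed and convex, hence weakly closed, so also
`Ψ(u) ≤ liminf Ψ(uⱼ)`; thus `Ψ(uⱼ) → Ψ(u)` and (Ψ3) turns weak into strong convergence. Every
subsequence has a further subsequence with these properties, so they hold for the whole sequence,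
and testing at an arbitrary `v` and letting `j → ∞` shows that `u` is critical.
-/

open Set Filter Metric Bornology Topology

noncomputable section

variable {X : Type*} [NormedAddCommGroup X] [NormedSpace ℝ X]

/-- The functional `I_λ = λΨ − Φ`, with extended-real values. -/
def ILam (Ψ : X → EReal) (Φ : X → ℝ) (lam : ℝ) (u : X) : EReal :=
  (lam : EReal) * Ψ u - ((Φ u : ℝ) : EReal)

/-- `u` is a critical point of `I_λ = λΨ − Φ` in the sense of Szulkin. -/
def IsCriticalPoint (Ψ : X → EReal) (Φ : X → ℝ) (lam : ℝ) (u : X) : Prop :=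
  ∀ v : X, 0 ≤ (lam : EReal) * (Ψ v - Ψ u) - ((fderiv ℝ Φ u (v - u) : ℝ) : EReal)

def WeakTendsto (u : ℕ → X) (w : X) : Prop :=
  ∀ f : StrongDual ℝ X, Tendsto (fun j => f (u j)) atTop (𝓝 (f w))

namespace WeakTendsto

variable {u : ℕ → X} {w : X}

theorem comp (hu : WeakTendsto u w) {φ : ℕ → ℕ} (hφ : Tendsto φ atTop atTop) :
    WeakTendsto (u ∘ φ) w :=
  fun f => (hu f).comp hφ

theorem unique {w' : X} (hu : WeakTendsto u w) (hu' : WeakTendsto u w') : w = w' :=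
  SeparatingDual.eq_iff_forall_dual_eq.2 fun f => tendsto_nhds_unique (hu f) (hu' f)

/-- Banach–Steinhaus, applied in the (always complete) dual space. -/
theorem isBounded_range (hu : WeakTendsto u w) : IsBounded (range u) := by
  obtain ⟨C, hC⟩ := banach_steinhaus (g := fun j => NormedSpace.inclusionInDoubleDualLi ℝ (u j))
    fun f => let ⟨C, hC⟩ := (hu f).norm.bddAbove_range; ⟨C, fun j => hC ⟨j, rfl⟩⟩
  refine isBounded_iff_forall_norm_le.2 ⟨C, forall_mem_range.2 fun j => ?_⟩
  rw [← (NormedSpace.inclusionInDoubleDualLi ℝ).norm_map]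
  exact hC j

theorem tendsto_toWeakSpace (hu : WeakTendsto u w) :
    Tendsto (fun j => toWeakSpace ℝ X (u j)) atTop (𝓝 (toWeakSpace ℝ X w)) :=
  (WeakBilin.tendsto_iff_forall_eval_tendsto _
    fun _ _ h => SeparatingDual.eq_iff_forall_dual_eq.2 (LinearMap.congr_fun h)).2 hu

/-- Closed convex sets are weakly closed. -/
theorem mem_of_frequently_mem {K : Set X} (hK : IsClosed K) (hKc : Convex ℝ K)
    (hu : WeakTendsto u w) (h : ∃ᶠ j in atTop, u j ∈ K) : w ∈ K := by
  have hKw : IsClosed (toWeakSpace ℝ X '' K) := by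
    rw [← hK.closure_eq, hKc.toWeakSpace_closure ℝ]
    exact isClosed_closure
  obtain ⟨x, hx, hxw⟩ := hKw.mem_of_frequently_of_tendsto
    (h.mono fun j hj => mem_image_of_mem _ hj) hu.tendsto_toWeakSpace
  rwa [← (toWeakSpace ℝ X).injective hxw]

end WeakTendsto

section Convex

variable {Ψ : X → EReal}

theorem convex_setOf_le_coe
    (hΨconv : ∀ u v : X, ∀ a b : ℝ, 0 ≤ a → 0 ≤ b → a + b = 1 →
      Ψ (a • u + b • v) ≤ (a : EReal) * Ψ u + (b : EReal) * Ψ v) (y : ℝ) :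
    Convex ℝ {x | Ψ x ≤ y} := by
  intro p hp q hq a b ha hb hab
  calc Ψ (a • p + b • q) ≤ a * Ψ p + b * Ψ q := hΨconv p q a b ha hb hab
    _ ≤ a * y + b * y := add_le_add (mul_le_mul_of_nonneg_left hp (EReal.coe_nonneg.2 ha))
        (mul_le_mul_of_nonneg_left hq (EReal.coe_nonneg.2 hb))
    _ = y := by rw [← EReal.coe_mul, ← EReal.coe_mul, ← EReal.coe_add, ← add_mul, hab, one_mul]

theorem WeakTendsto.le_liminf (hΨlsc : LowerSemicontinuous Ψ)
    (hΨconv : ∀ u v : X, ∀ a b : ℝ, 0 ≤ a → 0 ≤ b → a + b = 1 →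
      Ψ (a • u + b • v) ≤ (a : EReal) * Ψ u + (b : EReal) * Ψ v)
    {u : ℕ → X} {w : X} (hu : WeakTendsto u w) :
    Ψ w ≤ liminf (fun j => Ψ (u j)) atTop := by
  refine not_lt.1 fun h => ?_
  obtain ⟨y, hy, hyw⟩ := EReal.exists_between_coe_real h
  have hfreq : ∃ᶠ j in atTop, u j ∈ {x | Ψ x ≤ y} :=
    (frequently_lt_of_liminf_lt (by isBoundedDefault) hy).mono fun _ hj => hj.le
  have hw : w ∈ {x | Ψ x ≤ y} :=
    hu.mem_of_frequently_mem (hΨlsc.isClosed_preimage y) (convex_setOf_le_coe hΨconv y) hfreq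
  exact hyw.not_ge hw

end Convex

theorem EReal.coe_toReal_of_nonneg {x : EReal} (h0 : 0 ≤ x) (hx : x ≠ ⊤) :
    ((x.toReal : ℝ) : EReal) = x :=
  EReal.coe_toReal hx (ne_bot_of_le_ne_bot EReal.zero_ne_bot h0)

def IsApproxCriticalPoint (Ψ : X → EReal) (Φ : X → ℝ) (lam ε : ℝ) (u : X) : Prop :=
  ∀ v : X, ((-(ε * ‖v - u‖) : ℝ) : EReal) ≤
    (lam : EReal) * (Ψ v - Ψ u) - ((fderiv ℝ Φ u (v - u) : ℝ) : EReal)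

namespace IsApproxCriticalPoint

variable {Ψ : X → EReal} {Φ : X → ℝ} {lam ε : ℝ} {u : X}

theorem ne_top (h : IsApproxCriticalPoint Ψ Φ lam ε u) (hΨ0 : Ψ 0 = 0) (hlam : 0 < lam) :
    Ψ u ≠ ⊤ := by
  intro htop
  have h0 := h 0
  rw [hΨ0, htop, zero_sub (⊤ : EReal), EReal.neg_top, EReal.coe_mul_bot_of_pos hlam,
    EReal.bot_sub, le_bot_iff] at h0
  exact EReal.coe_ne_bot _ h0

theorem mul_toReal_le (h : IsApproxCriticalPoint Ψ Φ lam ε u) (hΨnn : ∀ x, 0 ≤ Ψ x)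
    (hu : Ψ u ≠ ⊤) {v : X} (hv : Ψ v ≠ ⊤) :
    lam * (Ψ u).toReal ≤ lam * (Ψ v).toReal + ε * ‖v - u‖ - fderiv ℝ Φ u (v - u) := by
  have hv' := h v
  rw [← EReal.coe_toReal_of_nonneg (hΨnn u) hu, ← EReal.coe_toReal_of_nonneg (hΨnn v) hv,
    ← EReal.coe_sub, ← EReal.coe_mul, ← EReal.coe_sub, EReal.coe_le_coe_iff] at hv'
  linarith

end IsApproxCriticalPoint

theorem eventually_lt_of_forall_eventually_mul_le {a lams : ℕ → ℝ} {lam b y : ℝ}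
    (hlams : Tendsto lams atTop (𝓝 lam)) (hlam : 0 < lam)
    (h : ∀ δ > 0, ∀ᶠ j in atTop, lams j * a j ≤ b + δ) (hy : b < lam * y) :
    ∀ᶠ j in atTop, a j < y := by
  have hmid : b + (lam * y - b) / 2 < lam * y := by linarith
  filter_upwards [h _ (half_pos (sub_pos.2 hy)), (hlams.mul_const y).eventually_const_lt hmid,
    hlams.eventually_const_lt hlam] with j hj hjy hj0
  exact lt_of_mul_lt_mul_left (hj.trans_lt hjy) hj0.le

section ApproxCriticalSequence

variable {Ψ : X → EReal} {Φ : X → ℝ} {εs lams : ℕ → ℝ} {u : ℕ → X} {lam : ℝ} {w : X}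

theorem eventually_mul_toReal_le_add (hΨnn : ∀ x, 0 ≤ Ψ x)
    (hPS : ∀ j, IsApproxCriticalPoint Ψ Φ (lams j) (εs j) (u j)) (hfin : ∀ j, Ψ (u j) ≠ ⊤)
    (hu : IsBounded (range u)) (hε : Tendsto εs atTop (𝓝 0))
    (hlams : Tendsto lams atTop (𝓝 lam)) {v : X} (hv : Ψ v ≠ ⊤)
    (hΦ' : ((fderiv ℝ Φ w (v - w) : ℝ) : EReal) ≤
      liminf (fun j => ((fderiv ℝ Φ (u j) (v - u j) : ℝ) : EReal)) atTop)
    {δ : ℝ} (hδ : 0 < δ) :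
    ∀ᶠ j in atTop,
      lams j * (Ψ (u j)).toReal ≤ lam * (Ψ v).toReal - fderiv ℝ Φ w (v - w) + δ := by
  obtain ⟨C, hC⟩ := isBounded_iff_forall_norm_le.1 hu
  have hdist : Tendsto (fun j => εs j * ‖v - u j‖) atTop (𝓝 0) :=
    hε.zero_mul_isBoundedUnder_le <| isBoundedUnder_of ⟨‖v‖ + C, fun j => by
      simpa using (norm_sub_le v (u j)).trans (add_le_add_right (hC _ (mem_range_self j)) _)⟩
  have hderiv : ∀ᶠ j in atTop, fderiv ℝ Φ w (v - w) - δ / 3 < fderiv ℝ Φ (u j) (v - u j) :=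
    (eventually_lt_of_lt_liminf ((EReal.coe_lt_coe_iff.2 (by linarith)).trans_le hΦ')).mono
      fun _ hj => EReal.coe_lt_coe_iff.1 hj
  filter_upwards [hdist.eventually_lt_const (by positivity : (0 : ℝ) < δ / 3),
    (hlams.mul_const (Ψ v).toReal).eventually_lt_const
      (by linarith : lam * (Ψ v).toReal < lam * (Ψ v).toReal + δ / 3), hderiv] with j h1 h2 h3
  linarith [(hPS j).mul_toReal_le hΨnn (hfin j) hv]

theorem isCriticalPoint_of_tendsto (hΨnn : ∀ x, 0 ≤ Ψ x) (hw : Ψ w ≠ ⊤)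
    (hlim : Tendsto (fun j => lams j * (Ψ (u j)).toReal) atTop (𝓝 (lam * (Ψ w).toReal)))
    (hbound : ∀ v, Ψ v ≠ ⊤ → ∀ δ > 0, ∀ᶠ j in atTop,
      lams j * (Ψ (u j)).toReal ≤ lam * (Ψ v).toReal - fderiv ℝ Φ w (v - w) + δ)
    (hlam : 0 < lam) :
    IsCriticalPoint Ψ Φ lam w := by
  intro v
  rw [← EReal.coe_toReal_of_nonneg (hΨnn w) hw]
  by_cases hv : Ψ v = ⊤
  · rw [hv, EReal.top_sub_coe, EReal.coe_mul_top_of_pos hlam, EReal.top_sub_coe]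
    exact le_top
  rw [← EReal.coe_toReal_of_nonneg (hΨnn v) hv, ← EReal.coe_sub, ← EReal.coe_mul,
    ← EReal.coe_sub, EReal.coe_nonneg]
  have hlimit : lam * (Ψ w).toReal ≤ lam * (Ψ v).toReal - fderiv ℝ Φ w (v - w) :=
    le_of_forall_pos_le_add fun δ hδ => le_of_tendsto hlim (hbound v hv δ hδ)
  linarith

theorem tendsto_toReal_of_approxCritical (hΨ0 : Ψ 0 = 0) (hΨnn : ∀ x, 0 ≤ Ψ x)
    (hΨlsc : LowerSemicontinuous Ψ)
    (hΨconv : ∀ u v : X, ∀ a b : ℝ, 0 ≤ a → 0 ≤ b → a + b = 1 →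
      Ψ (a • u + b • v) ≤ (a : EReal) * Ψ u + (b : EReal) * Ψ v)
    (hPS : ∀ j, IsApproxCriticalPoint Ψ Φ (lams j) (εs j) (u j)) (hlams0 : ∀ j, 0 < lams j)
    (hε : Tendsto εs atTop (𝓝 0)) (hlam : 0 < lam) (hlams : Tendsto lams atTop (𝓝 lam))
    (hu : WeakTendsto u w)
    (hΦ' : ∀ v, ((fderiv ℝ Φ w (v - w) : ℝ) : EReal) ≤
      liminf (fun j => ((fderiv ℝ Φ (u j) (v - u j) : ℝ) : EReal)) atTop) :
    Ψ w ≠ ⊤ ∧ Tendsto (fun j => (Ψ (u j)).toReal) atTop (𝓝 (Ψ w).toReal) ∧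
      IsCriticalPoint Ψ Φ lam w := by
  have hfin j : Ψ (u j) ≠ ⊤ := (hPS j).ne_top hΨ0 (hlams0 j)
  have hcoe j : (((Ψ (u j)).toReal : ℝ) : EReal) = Ψ (u j) :=
    EReal.coe_toReal_of_nonneg (hΨnn _) (hfin j)
  have hbound v (hv : Ψ v ≠ ⊤) δ (hδ : 0 < δ) :=
    eventually_mul_toReal_le_add hΨnn hPS hfin hu.isBounded_range hε hlams hv (hΦ' v) hδ
  have hlsc := hu.le_liminf hΨlsc hΨconv
  -- testing at `v = 0` bounds `Ψ (u j)` from above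
  have hw : Ψ w ≠ ⊤ := by
    set b := lam * (Ψ 0).toReal - fderiv ℝ Φ w (0 - w)
    have hev : ∀ᶠ j in atTop, Ψ (u j) ≤ ((b / lam + 1 : ℝ) : EReal) :=
      (eventually_lt_of_forall_eventually_mul_le hlams hlam (hbound 0 (by simp [hΨ0]))
        ((div_lt_iff₀' hlam).1 (lt_add_one _))).mono
          fun j hj => hcoe j ▸ EReal.coe_le_coe_iff.2 hj.le
    exact ne_top_of_le_ne_top (EReal.coe_ne_top _)
      (hlsc.trans (liminf_le_of_frequently_le' hev.frequently))
  have hψ : Tendsto (fun j => (Ψ (u j)).toReal) atTop (𝓝 (Ψ w).toReal) := by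
    refine tendsto_order.2 ⟨fun y hy => ?_, fun y hy => ?_⟩
    · have hyw : (y : EReal) < liminf (fun j => Ψ (u j)) atTop :=
        ((EReal.coe_lt_coe_iff.2 hy).trans_eq (EReal.coe_toReal_of_nonneg (hΨnn w) hw)).trans_le
          hlsc
      exact (eventually_lt_of_lt_liminf hyw).mono fun j hj =>
        EReal.coe_lt_coe_iff.1 ((hcoe j).symm ▸ hj)
    · exact eventually_lt_of_forall_eventually_mul_le hlams hlam (by simpa using hbound w hw)
        (mul_lt_mul_of_pos_left hy hlam)
  exact ⟨hw, hψ, isCriticalPoint_of_tendsto hΨnn hw (hlams.mul hψ) hbound hlam⟩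

theorem exists_subseq_tendsto_of_approxCritical (hΨ0 : Ψ 0 = 0) (hΨnn : ∀ x, 0 ≤ Ψ x)
    (hΨlsc : LowerSemicontinuous Ψ)
    (hΨconv : ∀ u v : X, ∀ a b : ℝ, 0 ≤ a → 0 ≤ b → a + b = 1 →
      Ψ (a • u + b • v) ≤ (a : EReal) * Ψ u + (b : EReal) * Ψ v)
    (hΨ3 : ∀ (u : ℕ → X) (w : X), (∀ j, Ψ (u j) ≠ ⊤) → Ψ w ≠ ⊤ → WeakTendsto u w →
      Tendsto (fun j => Ψ (u j)) atTop (𝓝 (Ψ w)) → Tendsto (fun j => ‖u j - w‖) atTop (𝓝 0))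
    (hΦ2 : ∀ u : ℕ → X, IsBounded (range u) →
      ∃ (φ : ℕ → ℕ) (w : X), StrictMono φ ∧ WeakTendsto (fun j => u (φ j)) w ∧
        ∀ v : X, ((fderiv ℝ Φ w (v - w) : ℝ) : EReal) ≤
          liminf (fun j => ((fderiv ℝ Φ (u (φ j)) (v - u (φ j)) : ℝ) : EReal)) atTop)
    (hPS : ∀ j, IsApproxCriticalPoint Ψ Φ (lams j) (εs j) (u j)) (hlams0 : ∀ j, 0 < lams j)
    (hε : Tendsto εs atTop (𝓝 0)) (hlam : 0 < lam) (hlams : Tendsto lams atTop (𝓝 lam))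
    (hu : WeakTendsto u w) :
    ∃ φ : ℕ → ℕ, StrictMono φ ∧ Ψ w ≠ ⊤ ∧ IsCriticalPoint Ψ Φ lam w ∧
      Tendsto (fun j => (Ψ (u (φ j))).toReal) atTop (𝓝 (Ψ w).toReal) ∧
      Tendsto (fun j => ‖u (φ j) - w‖) atTop (𝓝 0) := by
  obtain ⟨φ, w', hφ, huφ, hΦ'⟩ := hΦ2 u hu.isBounded_range
  obtain rfl : w = w' := (hu.comp hφ.tendsto_atTop).unique huφ
  have hfin j : Ψ (u (φ j)) ≠ ⊤ := (hPS (φ j)).ne_top hΨ0 (hlams0 _)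
  obtain ⟨hw, hψ, hcrit⟩ := tendsto_toReal_of_approxCritical hΨ0 hΨnn hΨlsc hΨconv
    (fun j => hPS (φ j)) (fun j => hlams0 _) (hε.comp hφ.tendsto_atTop) hlam
    (hlams.comp hφ.tendsto_atTop) huφ hΦ'
  have hΨφ : Tendsto (fun j => Ψ (u (φ j))) atTop (𝓝 (Ψ w)) := by
    simpa only [EReal.coe_toReal_of_nonneg (hΨnn _) (hfin _),
      EReal.coe_toReal_of_nonneg (hΨnn w) hw] using EReal.tendsto_coe.2 hψ
  exact ⟨φ, hφ, hw, hcrit, hψ, hΨ3 _ w hfin hw huφ hΨφ⟩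

/-- Every subsequence satisfies the same hypotheses and has the same weak limit, so the
subsequence principle upgrades the conclusions to the whole sequence. -/
theorem tendsto_of_approxCritical (hΨ0 : Ψ 0 = 0) (hΨnn : ∀ x, 0 ≤ Ψ x)
    (hΨlsc : LowerSemicontinuous Ψ)
    (hΨconv : ∀ u v : X, ∀ a b : ℝ, 0 ≤ a → 0 ≤ b → a + b = 1 →
      Ψ (a • u + b • v) ≤ (a : EReal) * Ψ u + (b : EReal) * Ψ v)
    (hΨ3 : ∀ (u : ℕ → X) (w : X), (∀ j, Ψ (u j) ≠ ⊤) → Ψ w ≠ ⊤ → WeakTendsto u w →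
      Tendsto (fun j => Ψ (u j)) atTop (𝓝 (Ψ w)) → Tendsto (fun j => ‖u j - w‖) atTop (𝓝 0))
    (hΦ2 : ∀ u : ℕ → X, IsBounded (range u) →
      ∃ (φ : ℕ → ℕ) (w : X), StrictMono φ ∧ WeakTendsto (fun j => u (φ j)) w ∧
        ∀ v : X, ((fderiv ℝ Φ w (v - w) : ℝ) : EReal) ≤
          liminf (fun j => ((fderiv ℝ Φ (u (φ j)) (v - u (φ j)) : ℝ) : EReal)) atTop)
    (hPS : ∀ j, IsApproxCriticalPoint Ψ Φ (lams j) (εs j) (u j)) (hlams0 : ∀ j, 0 < lams j)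
    (hε : Tendsto εs atTop (𝓝 0)) (hlam : 0 < lam) (hlams : Tendsto lams atTop (𝓝 lam))
    (hu : WeakTendsto u w) :
    Tendsto (fun j => ‖u j - w‖) atTop (𝓝 0) ∧ Ψ w ≠ ⊤ ∧ IsCriticalPoint Ψ Φ lam w ∧
      Tendsto (fun j => (Ψ (u j)).toReal) atTop (𝓝 (Ψ w).toReal) := by
  have hsub (ns : ℕ → ℕ) (hns : Tendsto ns atTop atTop) :=
    exists_subseq_tendsto_of_approxCritical hΨ0 hΨnn hΨlsc hΨconv hΨ3 hΦ2 (fun j => hPS (ns j))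
      (fun j => hlams0 _) (hε.comp hns) hlam (hlams.comp hns) (hu.comp hns)
  obtain ⟨-, -, hw, hcrit, -⟩ := hsub id tendsto_id
  refine ⟨tendsto_of_subseq_tendsto fun ns hns => ?_, hw, hcrit,
    tendsto_of_subseq_tendsto fun ns hns => ?_⟩
  · obtain ⟨φ, -, -, -, -, hφ⟩ := hsub ns hns
    exact ⟨φ, hφ⟩
  · obtain ⟨φ, -, -, -, hφ, -⟩ := hsub ns hns
    exact ⟨φ, hφ⟩

end ApproxCriticalSequence

theorem ILam_eq_coe {Y : Type*} {Ψ : Y → EReal} (Φ : Y → ℝ) (lam : ℝ) {x : Y}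
    (hΨnn : ∀ x, 0 ≤ Ψ x) (hx : Ψ x ≠ ⊤) :
    ILam Ψ Φ lam x = ((lam * (Ψ x).toReal - Φ x : ℝ) : EReal) := by
  rw [EReal.coe_sub, EReal.coe_mul, EReal.coe_toReal_of_nonneg (hΨnn x) hx]
  rfl

theorem tendsto_ILam {Y : Type*} [TopologicalSpace Y] {Ψ : Y → EReal} {Φ : Y → ℝ}
    {lams : ℕ → ℝ} {u : ℕ → Y} {lam : ℝ} {w : Y}
    (hΨnn : ∀ x, 0 ≤ Ψ x) (hΦ : Continuous Φ) (hfin : ∀ j, Ψ (u j) ≠ ⊤) (hw : Ψ w ≠ ⊤)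
    (hlams : Tendsto lams atTop (𝓝 lam)) (hu : Tendsto u atTop (𝓝 w))
    (hψ : Tendsto (fun j => (Ψ (u j)).toReal) atTop (𝓝 (Ψ w).toReal)) :
    Tendsto (fun j => ILam Ψ Φ (lams j) (u j)) atTop (𝓝 (ILam Ψ Φ lam w)) := by
  simp only [ILam_eq_coe Φ _ hΨnn (hfin _), ILam_eq_coe Φ _ hΨnn hw]
  exact EReal.tendsto_coe.2 ((hlams.mul hψ).sub ((hΦ.tendsto w).comp hu))

theorem weak_to_strong_convergence_of_approximate_critical_sequences_general
    (Ψ : X → EReal) (Φ : X → ℝ)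
    -- (Ψ1)
    (hΨ0 : Ψ 0 = 0)
    (hΨnn : ∀ u : X, 0 ≤ Ψ u)
    (hΨlsc : LowerSemicontinuous Ψ)
    (hΨconv : ∀ u v : X, ∀ a b : ℝ, 0 ≤ a → 0 ≤ b → a + b = 1 →
      Ψ (a • u + b • v) ≤ (a : EReal) * Ψ u + (b : EReal) * Ψ v)
    -- (Ψ3)
    (hΨ3 : ∀ (u : ℕ → X) (w : X), (∀ j, Ψ (u j) ≠ ⊤) → Ψ w ≠ ⊤ →
      (∀ f : X →L[ℝ] ℝ, Tendsto (fun j => f (u j)) atTop (𝓝 (f w))) →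
      Tendsto (fun j => Ψ (u j)) atTop (𝓝 (Ψ w)) →
      Tendsto (fun j => ‖u j - w‖) atTop (𝓝 0))
    -- (Φ1)
    (hΦ : ContDiff ℝ 1 Φ)
    -- (Φ2)
    (hΦ2 : ∀ u : ℕ → X, IsBounded (range u) →
      ∃ (φ : ℕ → ℕ) (w : X), StrictMono φ ∧
        (∀ f : X →L[ℝ] ℝ, Tendsto (fun j => f (u (φ j))) atTop (𝓝 (f w))) ∧
        ∀ v : X, ((fderiv ℝ Φ w (v - w) : ℝ) : EReal) ≤
          Filter.liminf
            (fun j => ((fderiv ℝ Φ (u (φ j)) (v - u (φ j)) : ℝ) : EReal)) atTop) :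
    -- main conclusion
    (∀ (εs lams : ℕ → ℝ) (u : ℕ → X) (lam : ℝ) (w : X),
      (∀ j, 0 < εs j) → Tendsto εs atTop (𝓝 0) →
      (∀ j, 0 < lams j) → 0 < lam → Tendsto lams atTop (𝓝 lam) →
      (∀ f : X →L[ℝ] ℝ, Tendsto (fun j => f (u j)) atTop (𝓝 (f w))) →
      (∀ (j : ℕ) (v : X),
        ((-(εs j * ‖v - u j‖) : ℝ) : EReal) ≤
          (lams j : EReal) * (Ψ v - Ψ (u j)) -
            ((fderiv ℝ Φ (u j) (v - u j) : ℝ) : EReal)) →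
      Tendsto (fun j => ‖u j - w‖) atTop (𝓝 0) ∧
      IsCriticalPoint Ψ Φ lam w ∧
      ILam Ψ Φ lam w ≠ ⊤ ∧ ILam Ψ Φ lam w ≠ ⊥ ∧
      Tendsto (fun j => ILam Ψ Φ (lams j) (u j)) atTop (𝓝 (ILam Ψ Φ lam w))) ∧
    -- in particular: every bounded Palais–Smale sequence for `I_λ` at a level `c`
    -- admits a strongly convergent subsequence
    (∀ (lam c : ℝ) (u : ℕ → X), 0 < lam → IsBounded (range u) →
      Tendsto (fun j => ILam Ψ Φ lam (u j)) atTop (𝓝 ((c : ℝ) : EReal)) →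
      (∃ εs : ℕ → ℝ, (∀ j, 0 < εs j) ∧ Tendsto εs atTop (𝓝 0) ∧
        ∀ (j : ℕ) (v : X),
          ((-(εs j * ‖v - u j‖) : ℝ) : EReal) ≤
            (lam : EReal) * (Ψ v - Ψ (u j)) -
              ((fderiv ℝ Φ (u j) (v - u j) : ℝ) : EReal)) →
      ∃ (φ : ℕ → ℕ) (w : X), StrictMono φ ∧
        Tendsto (fun j => ‖u (φ j) - w‖) atTop (𝓝 0)) := by
  have hconv {εs lams : ℕ → ℝ} {u : ℕ → X} {lam : ℝ} {w : X}
      (hPS : ∀ j, IsApproxCriticalPoint Ψ Φ (lams j) (εs j) (u j)) (hlams0 : ∀ j, 0 < lams j)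
      (hε : Tendsto εs atTop (𝓝 0)) (hlam : 0 < lam) (hlams : Tendsto lams atTop (𝓝 lam))
      (hu : WeakTendsto u w) :=
    tendsto_of_approxCritical hΨ0 hΨnn hΨlsc hΨconv hΨ3 hΦ2 hPS hlams0 hε hlam hlams hu
  refine ⟨fun εs lams u lam w _ hε hlams0 hlam hlams hu hPS => ?_, ?_⟩
  · obtain ⟨hstrong, hw, hcrit, hψ⟩ := hconv hPS hlams0 hε hlam hlams hu
    have hfin j : Ψ (u j) ≠ ⊤ := IsApproxCriticalPoint.ne_top (hPS j) hΨ0 (hlams0 j)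
    have hI := ILam_eq_coe Φ lam hΨnn hw
    exact ⟨hstrong, hcrit, hI ▸ EReal.coe_ne_top _, hI ▸ EReal.coe_ne_bot _,
      tendsto_ILam hΨnn hΦ.continuous hfin hw hlams (tendsto_iff_norm_sub_tendsto_zero.2 hstrong)
        hψ⟩
  · rintro lam - u hlam hbdd - ⟨εs, -, hε, hPS⟩
    obtain ⟨φ, w, hφ, hu, -⟩ := hΦ2 u hbdd
    exact ⟨φ, w, hφ, (hconv (fun j => hPS (φ j)) (fun _ => hlam) (hε.comp hφ.tendsto_atTop) hlam
      tendsto_const_nhds hu).1⟩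

theorem weak_to_strong_convergence_of_approximate_critical_sequences
    [CompleteSpace X]
    (Ψ : X → EReal) (Φ : X → ℝ)
    -- (Ψ1)
    (hΨ0 : Ψ 0 = 0)
    (hΨnn : ∀ u : X, 0 ≤ Ψ u)
    (hΨlsc : LowerSemicontinuous Ψ)
    (hΨconv : ∀ u v : X, ∀ a b : ℝ, 0 ≤ a → 0 ≤ b → a + b = 1 →
      Ψ (a • u + b • v) ≤ (a : EReal) * Ψ u + (b : EReal) * Ψ v)
    -- (Ψ3)
    (hΨ3 : ∀ (u : ℕ → X) (w : X), (∀ j, Ψ (u j) ≠ ⊤) → Ψ w ≠ ⊤ →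
      (∀ f : X →L[ℝ] ℝ, Tendsto (fun j => f (u j)) atTop (𝓝 (f w))) →
      Tendsto (fun j => Ψ (u j)) atTop (𝓝 (Ψ w)) →
      Tendsto (fun j => ‖u j - w‖) atTop (𝓝 0))
    -- (Φ1)
    (hΦ : ContDiff ℝ 1 Φ)
    -- (Φ2)
    (hΦ2 : ∀ u : ℕ → X, IsBounded (range u) →
      ∃ (φ : ℕ → ℕ) (w : X), StrictMono φ ∧
        (∀ f : X →L[ℝ] ℝ, Tendsto (fun j => f (u (φ j))) atTop (𝓝 (f w))) ∧
        ∀ v : X, ((fderiv ℝ Φ w (v - w) : ℝ) : EReal) ≤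
          Filter.liminf
            (fun j => ((fderiv ℝ Φ (u (φ j)) (v - u (φ j)) : ℝ) : EReal)) atTop) :
    -- main conclusion
    (∀ (εs lams : ℕ → ℝ) (u : ℕ → X) (lam : ℝ) (w : X),
      (∀ j, 0 < εs j) → Tendsto εs atTop (𝓝 0) →
      (∀ j, 0 < lams j) → 0 < lam → Tendsto lams atTop (𝓝 lam) →
      (∀ f : X →L[ℝ] ℝ, Tendsto (fun j => f (u j)) atTop (𝓝 (f w))) →
      (∀ (j : ℕ) (v : X),
        ((-(εs j * ‖v - u j‖) : ℝ) : EReal) ≤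
          (lams j : EReal) * (Ψ v - Ψ (u j)) -
            ((fderiv ℝ Φ (u j) (v - u j) : ℝ) : EReal)) →
      Tendsto (fun j => ‖u j - w‖) atTop (𝓝 0) ∧
      IsCriticalPoint Ψ Φ lam w ∧
      ILam Ψ Φ lam w ≠ ⊤ ∧ ILam Ψ Φ lam w ≠ ⊥ ∧
      Tendsto (fun j => ILam Ψ Φ (lams j) (u j)) atTop (𝓝 (ILam Ψ Φ lam w))) ∧
    -- in particular: every bounded Palais–Smale sequence for `I_λ` at a level `c`
    -- admits a strongly convergent subsequence
    (∀ (lam c : ℝ) (u : ℕ → X), 0 < lam → IsBounded (range u) →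
      Tendsto (fun j => ILam Ψ Φ lam (u j)) atTop (𝓝 ((c : ℝ) : EReal)) →
      (∃ εs : ℕ → ℝ, (∀ j, 0 < εs j) ∧ Tendsto εs atTop (𝓝 0) ∧
        ∀ (j : ℕ) (v : X),
          ((-(εs j * ‖v - u j‖) : ℝ) : EReal) ≤
            (lam : EReal) * (Ψ v - Ψ (u j)) -
              ((fderiv ℝ Φ (u j) (v - u j) : ℝ) : EReal)) →
      ∃ (φ : ℕ → ℕ) (w : X), StrictMono φ ∧
        Tendsto (fun j => ‖u (φ j) - w‖) atTop (𝓝 0)) :=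
  weak_to_strong_convergence_of_approximate_critical_sequences_general Ψ Φ hΨ0 hΨnn hΨlsc hΨconv hΨ3
    hΦ hΦ2

end
end

section
/- (Principle of symmetric criticality.) Let X be a real Banach space and G a compact topological group acting linearly on X, with the action map G × X → X, (g,u) ↦ g·u, continuous. Let Ψ : X → (−∞,∞] be convex and lower semicontinuous with D(Ψ) ≠ ∅, let Φ ∈ C¹(X,ℝ), and assume both are G-invariant: Ψ(g·u) = Ψ(u) and Φ(g·u) = Φ(u) for all g ∈ G and u ∈ X. Set X_G := {u ∈ X : g·u = u for all g ∈ G} and I := Ψ − Φ. If u ∈ X_G satisfies Ψ(v) − Ψ(u) − Φ'(u)(v − u) ≥ 0 for all v ∈ X_G, then Ψ(v) − Ψ(u) − Φ'(u)(v − u) ≥ 0 for all v ∈ X; that is, every critical point of the restriction of I to X_G is a critical point of I on X. -/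
/-! Averaging over orbits with respect to the normalized Haar measure `μ` of `G` sends any `v` to a
fixed point `v̄ = ∫ g • v ∂μ`. The sublevel set `{Ψ ≤ Ψ v}` is closed, convex and contains the orbit
of `v`, so Jensen's inequality gives `Ψ v̄ ≤ Ψ v`. Since `Φ` is invariant and `u` is fixed, `Φ'(u)` is
invariant, hence `Φ'(u) v̄ = Φ'(u) v`. The critical-point inequality at `v̄` then yields the one at
`v`. -/

open MeasureTheory

noncomputable section

theorem convex_setOf_le_of_ereal_convex {E : Type*} [AddCommGroup E] [Module ℝ E] {Ψ : E → EReal}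
    (hΨ : ∀ u v : E, ∀ a b : ℝ, 0 ≤ a → 0 ≤ b → a + b = 1 →
      Ψ (a • u + b • v) ≤ (a : EReal) * Ψ u + (b : EReal) * Ψ v) (c : EReal) :
    Convex ℝ {x | Ψ x ≤ c} := by
  intro x hx y hy a b ha hb hab
  have ha' : (0 : EReal) ≤ a := EReal.coe_nonneg.mpr ha
  have hb' : (0 : EReal) ≤ b := EReal.coe_nonneg.mpr hb
  calc Ψ (a • x + b • y) ≤ a * Ψ x + b * Ψ y := hΨ x y a b ha hb hab
    _ ≤ a * c + b * c :=
      add_le_add (mul_le_mul_of_nonneg_left hx ha') (mul_le_mul_of_nonneg_left hy hb')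
    _ = c := by
      rw [← EReal.right_distrib_of_nonneg ha' hb', ← EReal.coe_add, hab, EReal.coe_one, one_mul]

theorem fderiv_apply_smul_of_smul_invariant {G X F : Type*} [Group G]
    [NormedAddCommGroup X] [NormedSpace ℝ X] [NormedAddCommGroup F] [NormedSpace ℝ F]
    [DistribMulAction G X] [SMulCommClass G ℝ X] [ContinuousConstSMul G X]
    {Φ : X → F} {g : G} (hΦ : ∀ x : X, Φ (g • x) = Φ x) {u : X} (hu : g • u = u)
    (w : X) : fderiv ℝ Φ u (g • w) = fderiv ℝ Φ u w := by
  have hcomp : Φ ∘ ContinuousLinearEquiv.smulLeft (R₁ := ℝ) g = Φ := funext hΦ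
  have hchain := congrArg (fun L : X →L[ℝ] F => L w)
    ((ContinuousLinearEquiv.smulLeft (R₁ := ℝ) g).comp_right_fderiv (f := Φ) (x := u))
  simpa [hcomp, hu] using hchain.symm

section OrbitAverage

variable {G X : Type*} [Group G] [TopologicalSpace G] [CompactSpace G]
  [MeasurableSpace G] [OpensMeasurableSpace G]
  [NormedAddCommGroup X] [DistribMulAction G X] [ContinuousSMul G X]

theorem integrable_smul_const (μ : Measure G) [IsFiniteMeasure μ] (v : X) :
    Integrable (fun g : G => g • v) μ :=
  (continuous_id.smul continuous_const).integrable_of_hasCompactSupport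
    (HasCompactSupport.of_compactSpace _)

variable [NormedSpace ℝ X]

def orbitAverage (μ : Measure G) (v : X) : X := ∫ g, g • v ∂μ

variable [CompleteSpace X]

theorem smul_orbitAverage [SMulCommClass G ℝ X] [MeasurableMul G] (μ : Measure G)
    [IsFiniteMeasure μ] [μ.IsMulLeftInvariant] (g : G) (v : X) :
    g • orbitAverage μ v = orbitAverage μ v := by
  have hcomm := (ContinuousLinearEquiv.smulLeft (R₁ := ℝ) (M₁ := X) g : X →L[ℝ] X)
    |>.integral_comp_comm (integrable_smul_const μ v)
  simp only [ContinuousLinearEquiv.coe_coe, ContinuousLinearEquiv.smulLeft_apply_apply,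
    ← mul_smul] at hcomm
  rw [orbitAverage, ← hcomm, integral_mul_left_eq_self (fun h : G => h • v) g]

theorem map_orbitAverage {F : Type*} [NormedAddCommGroup F] [NormedSpace ℝ F] [CompleteSpace F]
    (μ : Measure G) [IsProbabilityMeasure μ] (L : X →L[ℝ] F)
    (hL : ∀ (g : G) (w : X), L (g • w) = L w) (v : X) : L (orbitAverage μ v) = L v := by
  rw [orbitAverage, ← L.integral_comp_comm (integrable_smul_const μ v)]
  simp [hL]

theorem orbitAverage_mem (μ : Measure G) [IsProbabilityMeasure μ] {s : Set X} (hs : Convex ℝ s)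
    (hsc : IsClosed s) {v : X} (hv : ∀ g : G, g • v ∈ s) : orbitAverage μ v ∈ s :=
  hs.integral_mem hsc (.of_forall hv) (integrable_smul_const μ v)

end OrbitAverage

theorem isProbabilityMeasure_haarMeasure_top {G : Type*} [Group G] [TopologicalSpace G]
    [IsTopologicalGroup G] [CompactSpace G] [MeasurableSpace G] [BorelSpace G] :
    IsProbabilityMeasure (Measure.haarMeasure (⊤ : TopologicalSpace.PositiveCompacts G)) :=
  ⟨by simpa using Measure.haarMeasure_self (K₀ := (⊤ : TopologicalSpace.PositiveCompacts G))⟩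

theorem principle_of_symmetric_criticality_general
    {X : Type*} [NormedAddCommGroup X] [NormedSpace ℝ X] [CompleteSpace X]
    {G : Type*} [Group G] [TopologicalSpace G] [IsTopologicalGroup G] [CompactSpace G]
    [DistribMulAction G X] [SMulCommClass G ℝ X] [ContinuousSMul G X]
    (Ψ : X → EReal) (Φ : X → ℝ)
    -- Ψ convex and lower semicontinuous with D(Ψ) ≠ ∅
    (hΨlsc : LowerSemicontinuous Ψ)
    (hΨconv : ∀ u v : X, ∀ a b : ℝ, 0 ≤ a → 0 ≤ b → a + b = 1 →
      Ψ (a • u + b • v) ≤ (a : EReal) * Ψ u + (b : EReal) * Ψ v)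
    -- G-invariance
    (hΨinv : ∀ (g : G) (u : X), Ψ (g • u) = Ψ u)
    (hΦinv : ∀ (g : G) (u : X), Φ (g • u) = Φ u)
    -- u is a G-invariant critical point of the restriction of I to X_G
    (u : X) (hu : ∀ g : G, g • u = u)
    (hcrit : ∀ v : X, (∀ g : G, g • v = v) →
      0 ≤ Ψ v - Ψ u - ((fderiv ℝ Φ u (v - u) : ℝ) : EReal)) :
    -- then u is a critical point of I on all of X
    ∀ v : X, 0 ≤ Ψ v - Ψ u - ((fderiv ℝ Φ u (v - u) : ℝ) : EReal) := by
  intro v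
  borelize G
  have := isProbabilityMeasure_haarMeasure_top (G := G)
  set μ := Measure.haarMeasure (⊤ : TopologicalSpace.PositiveCompacts G)
  have hfix : ∀ g : G, g • orbitAverage μ v = orbitAverage μ v := (smul_orbitAverage μ · v)
  have hΨle : Ψ (orbitAverage μ v) ≤ Ψ v :=
    orbitAverage_mem μ (convex_setOf_le_of_ereal_convex hΨconv _) (hΨlsc.isClosed_preimage _)
      fun g => (hΨinv g v).le
  have hΦ' : fderiv ℝ Φ u (orbitAverage μ v - u) = fderiv ℝ Φ u (v - u) := by
    rw [map_sub, map_sub,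
      map_orbitAverage μ _ fun g => fderiv_apply_smul_of_smul_invariant (hΦinv g) (hu g)]
  calc 0 ≤ Ψ (orbitAverage μ v) - Ψ u - ((fderiv ℝ Φ u (v - u) : ℝ) : EReal) :=
        hΦ' ▸ hcrit _ hfix
    _ ≤ Ψ v - Ψ u - ((fderiv ℝ Φ u (v - u) : ℝ) : EReal) :=
        EReal.sub_le_sub (EReal.sub_le_sub hΨle le_rfl) le_rfl

/-- The principle of symmetric criticality for functionals of the form `I = Ψ − Φ`,
with `Ψ` convex and lower semicontinuous and `Φ` of class `C¹`, both invariant under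
a continuous linear action of a compact topological group `G` on a Banach space `X`. -/
theorem principle_of_symmetric_criticality
    {X : Type*} [NormedAddCommGroup X] [NormedSpace ℝ X] [CompleteSpace X]
    {G : Type*} [Group G] [TopologicalSpace G] [IsTopologicalGroup G] [CompactSpace G]
    [DistribMulAction G X] [SMulCommClass G ℝ X] [ContinuousSMul G X]
    (Ψ : X → EReal) (Φ : X → ℝ)
    -- Ψ convex and lower semicontinuous with D(Ψ) ≠ ∅
    (hΨlsc : LowerSemicontinuous Ψ)
    (hΨconv : ∀ u v : X, ∀ a b : ℝ, 0 ≤ a → 0 ≤ b → a + b = 1 →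
      Ψ (a • u + b • v) ≤ (a : EReal) * Ψ u + (b : EReal) * Ψ v)
    (hdom : ∃ w : X, Ψ w ≠ ⊤)
    -- Φ of class C¹
    (hΦ : ContDiff ℝ 1 Φ)
    -- G-invariance
    (hΨinv : ∀ (g : G) (u : X), Ψ (g • u) = Ψ u)
    (hΦinv : ∀ (g : G) (u : X), Φ (g • u) = Φ u)
    -- u is a G-invariant critical point of the restriction of I to X_G
    (u : X) (hu : ∀ g : G, g • u = u)
    (hcrit : ∀ v : X, (∀ g : G, g • v = v) →
      0 ≤ Ψ v - Ψ u - ((fderiv ℝ Φ u (v - u) : ℝ) : EReal)) :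
    -- then u is a critical point of I on all of X
    ∀ v : X, 0 ≤ Ψ v - Ψ u - ((fderiv ℝ Φ u (v - u) : ℝ) : EReal) :=
  principle_of_symmetric_criticality_general Ψ Φ hΨlsc hΨconv hΨinv hΦinv u hu hcrit

end
end

section
/- Let n ≥ 3, p ∈ [2, 2n/(n−2)] and r > 0. Let {u_k} be a sequence of Lipschitz functions on ℝ^n with |Du_k| ≤ 1 almost everywhere for every k, sup_k ( ‖u_k‖_{L^∞(ℝ^n)} + ∫_{ℝ^n} (|u_k|^p + |Du_k|^p) dx ) < ∞, and lim_{k→∞} sup_{y∈ℝ^n} ∫_{B(y,r)} |u_k|^p dx = 0. Then ‖u_k‖_{L^q(ℝ^n)} → 0 as k → ∞ for every q ∈ (p, ∞). -/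
open Set Filter Topology MeasureTheory Metric
open scoped ENNReal NNReal Convolution

/-!
Mollifying `u_k` shows that an a.e. bound `|Du_k| ≤ 1` makes each `u_k` `1`-Lipschitz. If
`|u_k(x)| ≥ ε`, then `|u_k| ≥ ε/2` on a ball around `x` whose radius depends only on `ε` and `r`,
so that ball carries local `L^p` mass bounded below uniformly in `k` and `x`; the vanishing of the
local masses therefore forces `u_k → 0` uniformly. Finally
`∫ |u_k|^q ≤ ‖u_k‖_∞^(q-p) ∫ |u_k|^p`, and the `L^p` masses are bounded.
-/

section Mollification

variable {E F : Type*} [NormedAddCommGroup E] [NormedSpace ℝ E] [FiniteDimensional ℝ E]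
  [MeasurableSpace E] [BorelSpace E] {μ : Measure E} [μ.IsAddHaarMeasure]
  [NormedAddCommGroup F] [NormedSpace ℝ F] [FiniteDimensional ℝ F] {f : E → F} {K : ℝ≥0}

open ContinuousLinearMap

theorem LipschitzWith.hasFDerivAt_convolution_right (hf : LipschitzWith K f) {ψ : E → ℝ}
    (hψ : Continuous ψ) (hψc : HasCompactSupport ψ) (x₀ : E) :
    HasFDerivAt (ψ ⋆[lsmul ℝ ℝ, μ] f) ((ψ ⋆[lsmul ℝ ℝ, μ] fderiv ℝ f) x₀) x₀ := by
  have hdiff : ∀ᵐ a ∂μ, DifferentiableAt ℝ f (x₀ - a) :=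
    (Measure.measurePreserving_sub_left μ x₀).quasiMeasurePreserving.ae hf.ae_differentiableAt
  refine (hasFDerivAt_integral_of_dominated_loc_of_lip
    (F := fun z a ↦ ψ a • f (z - a)) (bound := fun a ↦ K * ‖ψ a‖) univ_mem ?_ ?_ ?_ ?_ ?_ ?_).2
  · exact .of_forall fun z ↦ (hψ.smul (hf.continuous.comp (by fun_prop))).aestronglyMeasurable
  · exact (hψ.smul (hf.continuous.comp (by fun_prop))).integrable_of_hasCompactSupport
      hψc.smul_right
  · exact hψ.aestronglyMeasurable.smul
      ((measurable_fderiv ℝ f).comp (measurable_const.sub measurable_id)).aestronglyMeasurable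
  · refine .of_forall fun a ↦ (LipschitzWith.of_dist_le_mul fun z₁ z₂ ↦ ?_).lipschitzOnWith
    rw [Real.coe_nnabs, abs_of_nonneg (by positivity), dist_smul₀, mul_comm (K : ℝ), mul_assoc,
      ← dist_sub_right z₁ z₂ a]
    exact mul_le_mul_of_nonneg_left (hf.dist_le_mul _ _) (norm_nonneg _)
  · exact ((hψ.integrable_of_hasCompactSupport hψc).norm.const_mul _)
  · filter_upwards [hdiff] with a ha
    exact (ha.hasFDerivAt.comp x₀ ((hasFDerivAt_id x₀).sub_const a)).const_smul (ψ a)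

theorem ContDiffBump.lipschitzWith_normed_convolution (φ : ContDiffBump (0 : E))
    (hf : LipschitzWith K f) {C : ℝ≥0} (hC : ∀ᵐ x ∂μ, ‖fderiv ℝ f x‖ ≤ C) :
    LipschitzWith C (φ.normed μ ⋆[lsmul ℝ ℝ, μ] f) := by
  have hg := hf.hasFDerivAt_convolution_right (μ := μ) (φ.continuous_normed (μ := μ))
    φ.hasCompactSupport_normed
  refine lipschitzWith_of_nnnorm_fderiv_le (fun x ↦ (hg x).differentiableAt) fun x₀ ↦ ?_
  have hC' : ∀ᵐ a ∂μ, ‖fderiv ℝ f (x₀ - a)‖ ≤ C :=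
    (Measure.measurePreserving_sub_left μ x₀).quasiMeasurePreserving.ae hC
  rw [(hg x₀).fderiv, ← NNReal.coe_le_coe, coe_nnnorm, convolution_lsmul]
  calc ‖∫ a, φ.normed μ a • fderiv ℝ f (x₀ - a) ∂μ‖ ≤ ∫ a, φ.normed μ a * C ∂μ := by
        refine norm_integral_le_of_norm_le ((φ.integrable_normed (μ := μ)).mul_const _) ?_
        filter_upwards [hC'] with a ha
        rw [norm_smul, Real.norm_of_nonneg (φ.nonneg_normed a)]
        exact mul_le_mul_of_nonneg_left ha (φ.nonneg_normed a)
    _ = C := by rw [integral_mul_const, φ.integral_normed, one_mul]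

theorem LipschitzWith.of_ae_norm_fderiv_le (hf : LipschitzWith K f) {C : ℝ≥0}
    (hC : ∀ᵐ x ∂μ, ‖fderiv ℝ f x‖ ≤ C) : LipschitzWith C f := by
  let φ : ℕ → ContDiffBump (0 : E) := fun n ↦
    ⟨1 / (n + 2), 1 / (n + 1), by positivity, by gcongr; linarith⟩
  have hφ : Tendsto (fun n ↦ (φ n).rOut) atTop (𝓝 0) := tendsto_one_div_add_atTop_nhds_zero_nat
  refine (isClosed_setOfPred_lipschitzWith C).mem_of_tendsto (tendsto_pi_nhds.2 fun x ↦
    ContDiffBump.convolution_tendsto_right_of_continuous (μ := μ) hφ hf.continuous x)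
    (.of_forall fun n ↦ (φ n).lipschitzWith_normed_convolution hf hC)

end Mollification

section LocalMass

variable {E : Type*} [NormedAddCommGroup E] [ProperSpace E] [MeasurableSpace E] [BorelSpace E]
  {μ : Measure E} {p r : ℝ}

theorem LipschitzWith.rpow_mul_measureReal_ball_le_setIntegral [IsFiniteMeasureOnCompacts μ]
    {f : E → ℝ} {K : ℝ≥0} (hf : LipschitzWith K f) {x : E} {ρ δ : ℝ} (hρr : ρ ≤ r)
    (hδ : 0 ≤ δ) (hKρ : K * ρ ≤ |f x| - δ) (hp : 0 ≤ p)
    (hint : IntegrableOn (fun y ↦ |f y| ^ p) (ball x r) μ) :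
    δ ^ p * μ.real (ball x ρ) ≤ ∫ y in ball x r, |f y| ^ p ∂μ := by
  have hlower : ∀ y ∈ ball x ρ, δ ≤ |f y| := fun y hy ↦ by
    have hdist : |f x - f y| ≤ K * dist x y := by
      simpa only [Real.dist_eq] using hf.dist_le_mul x y
    have : K * dist x y ≤ K * ρ :=
      mul_le_mul_of_nonneg_left (mem_ball'.1 hy).le K.2
    linarith [abs_sub_abs_le_abs_sub (f x) (f y)]
  calc δ ^ p * μ.real (ball x ρ) ≤ ∫ y in ball x ρ, |f y| ^ p ∂μ :=
        setIntegral_ge_of_const_le_real measurableSet_ball measure_ball_lt_top.ne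
          (fun y hy ↦ Real.rpow_le_rpow hδ (hlower y hy) hp)
          (hint.mono_set (ball_subset_ball hρr))
    _ ≤ ∫ y in ball x r, |f y| ^ p ∂μ :=
        setIntegral_mono_set hint (.of_forall fun y ↦ by positivity)
          (ball_subset_ball hρr).eventuallyLE

theorem tendstoUniformly_zero_of_tendsto_iSup_setIntegral_rpow [μ.IsAddHaarMeasure] {ι : Type*}
    {l : Filter ι} {u : ι → E → ℝ} {K : ℝ≥0} (hu : ∀ i, LipschitzWith K (u i)) (hp : 0 ≤ p)
    (hr : 0 < r) (hint : ∀ i, Integrable (fun x ↦ |u i x| ^ p) μ)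
    (hvan : Tendsto (fun i ↦ ⨆ y, ∫ x in ball y r, |u i x| ^ p ∂μ) l (𝓝 0)) :
    TendstoUniformly u 0 l := by
  rw [Metric.tendstoUniformly_iff]
  intro ε hε
  obtain ⟨ρ, hρ, hρr, hKρ⟩ : ∃ ρ, 0 < ρ ∧ ρ ≤ r ∧ K * ρ ≤ ε / 2 := by
    refine ⟨min r (ε / (2 * (K + 1))), by positivity, min_le_left _ _, ?_⟩
    calc K * min r (ε / (2 * (K + 1))) ≤ K * (ε / (2 * (K + 1))) := by
          gcongr; exact min_le_right _ _
      _ ≤ ε / 2 := by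
        rw [mul_div_assoc', div_le_div_iff₀ (by positivity) two_pos]
        nlinarith
  have hη : 0 < (ε / 2) ^ p * μ.real (ball 0 ρ) :=
    mul_pos (by positivity)
      (ENNReal.toReal_pos (measure_ball_pos μ 0 hρ).ne' measure_ball_lt_top.ne)
  filter_upwards [hvan.eventually_lt_const hη] with i hi x
  rw [Pi.zero_apply, dist_zero_left, Real.norm_eq_abs]
  by_contra! hx
  -- without this bound the `⨆` in `hvan` could be the junk value `0`
  have hbdd : BddAbove (range fun y ↦ ∫ x in ball y r, |u i x| ^ p ∂μ) :=
    ⟨∫ x, |u i x| ^ p ∂μ, forall_mem_range.2 fun y ↦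
      setIntegral_le_integral (hint i) (.of_forall fun x ↦ by positivity)⟩
  have hmass := (hu i).rpow_mul_measureReal_ball_le_setIntegral (x := x) hρr (half_pos hε).le
    (by linarith) hp (hint i).integrableOn
  rw [Measure.addHaar_real_ball_center] at hmass
  linarith [le_ciSup hbdd x]

end LocalMass

section Interpolation

variable {α E : Type*} [MeasurableSpace α] {μ : Measure α} [NormedAddCommGroup E] {p q : ℝ}

theorem lintegral_enorm_rpow_le_eLpNorm_top_rpow_mul {f : α → E}
    (hf : AEStronglyMeasurable f μ) (hp : 0 ≤ p) (hpq : p ≤ q) :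
    ∫⁻ x, ‖f x‖ₑ ^ q ∂μ ≤ eLpNorm f ∞ μ ^ (q - p) * ∫⁻ x, ‖f x‖ₑ ^ p ∂μ := by
  rw [mul_comm, ← lintegral_mul_const'' _ (hf.enorm.pow_const p)]
  refine lintegral_mono_ae ?_
  filter_upwards [enorm_ae_le_eLpNormEssSup f μ] with x hx
  calc ‖f x‖ₑ ^ q = ‖f x‖ₑ ^ p * ‖f x‖ₑ ^ (q - p) := by
        rw [← ENNReal.rpow_add_of_nonneg _ _ hp (sub_nonneg.2 hpq), add_sub_cancel]
    _ ≤ ‖f x‖ₑ ^ p * eLpNorm f ∞ μ ^ (q - p) := by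
        rw [eLpNorm_exponent_top]; gcongr

theorem TendstoUniformly.tendsto_eLpNorm_top_zero {ι : Type*} {l : Filter ι} {f : ι → α → E}
    (h : TendstoUniformly f 0 l) : Tendsto (fun i ↦ eLpNorm (f i) ∞ μ) l (𝓝 0) := by
  refine ENNReal.tendsto_nhds_zero.2 fun ε hε ↦ ?_
  rcases eq_or_ne ε ∞ with rfl | hε_top
  · exact .of_forall fun _ ↦ le_top
  filter_upwards [Metric.tendstoUniformly_iff.1 h _ (ENNReal.toReal_pos hε.ne' hε_top)]
    with i hi
  rw [eLpNorm_exponent_top, ← ENNReal.ofReal_toReal hε_top]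
  refine eLpNormEssSup_le_of_ae_bound (.of_forall fun x ↦ ?_)
  simpa using (hi x).le

theorem tendsto_eLpNorm_zero_of_tendsto_eLpNorm_top {ι : Type*} {l : Filter ι}
    {f : ι → α → E} {M : ℝ≥0∞} (hf : ∀ i, AEStronglyMeasurable (f i) μ) (hp : 0 ≤ p)
    (hpq : p < q) (hM : M ≠ ∞) (hbdd : ∀ i, ∫⁻ x, ‖f i x‖ₑ ^ p ∂μ ≤ M)
    (htop : Tendsto (fun i ↦ eLpNorm (f i) ∞ μ) l (𝓝 0)) :
    Tendsto (fun i ↦ eLpNorm (f i) (.ofReal q) μ) l (𝓝 0) := by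
  have hq : 0 < q := hp.trans_lt hpq
  have hmajorant : Continuous fun t : ℝ≥0∞ ↦ (t ^ (q - p) * M) ^ (1 / q) :=
    (ENNReal.continuous_rpow_const).comp
      ((ENNReal.continuous_mul_const hM).comp ENNReal.continuous_rpow_const)
  have hlim := (hmajorant.tendsto 0).comp htop
  rw [ENNReal.zero_rpow_of_pos (sub_pos.2 hpq), zero_mul,
    ENNReal.zero_rpow_of_pos (by positivity)] at hlim
  refine tendsto_of_tendsto_of_tendsto_of_le_of_le tendsto_const_nhds hlim (fun _ ↦ zero_le)
    fun i ↦ ?_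
  rw [Function.comp_apply,
    eLpNorm_eq_lintegral_rpow_enorm_toReal (by simpa) ENNReal.ofReal_ne_top,
    ENNReal.toReal_ofReal hq.le]
  gcongr
  exact (lintegral_enorm_rpow_le_eLpNorm_top_rpow_mul (hf i) hp hpq.le).trans
    (by gcongr; exact hbdd i)

end Interpolation

theorem norm_gradient_eq_norm_fderiv {F : Type*} [NormedAddCommGroup F] [InnerProductSpace ℝ F]
    [CompleteSpace F] (f : F → ℝ) (x : F) : ‖gradient f x‖ = ‖fderiv ℝ f x‖ :=
  (InnerProductSpace.toDual ℝ F).symm.norm_map _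

theorem vanishing_lemma_general
    (n : ℕ) (p : ℝ) (hp : p ∈ Icc 2 (2 * (n : ℝ) / ((n : ℝ) - 2)))
    (r : ℝ) (hr : 0 < r)
    (u : ℕ → EuclideanSpace ℝ (Fin n) → ℝ)
    -- each u_k is Lipschitz with |Du_k| ≤ 1 a.e.
    (hLip : ∀ k : ℕ, ∃ K : NNReal, LipschitzWith K (u k))
    (hgrad : ∀ k : ℕ, ∀ᵐ x : EuclideanSpace ℝ (Fin n), ‖gradient (u k) x‖ ≤ 1)
    -- uniform L^∞ and W^{1,p} bounds
    (C : ℝ)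
    (hbound : ∀ k : ℕ,
      (∀ x : EuclideanSpace ℝ (Fin n), |u k x| ≤ C) ∧
      Integrable (fun x : EuclideanSpace ℝ (Fin n) =>
        |u k x| ^ p + ‖gradient (u k) x‖ ^ p) volume ∧
      (∫ x : EuclideanSpace ℝ (Fin n),
        (|u k x| ^ p + ‖gradient (u k) x‖ ^ p)) ≤ C)
    -- vanishing of the local L^p masses, uniformly in the center
    (hvan : Tendsto (fun k : ℕ =>
        ⨆ y : EuclideanSpace ℝ (Fin n), ∫ x in Metric.ball y r, |u k x| ^ p)
      atTop (𝓝 0)) :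
    -- then u_k → 0 in L^q(ℝⁿ) for every q ∈ (p, ∞)
    ∀ q : ℝ, p < q →
      Tendsto (fun k : ℕ => eLpNorm (u k) (ENNReal.ofReal q) volume) atTop (𝓝 0) := by
  intro q hq
  have hp0 : 0 ≤ p := by linarith [hp.1]
  have hu : ∀ k, LipschitzWith 1 (u k) := fun k ↦
    (hLip k).choose_spec.of_ae_norm_fderiv_le
      (by simpa [norm_gradient_eq_norm_fderiv] using hgrad k)
  have hint : ∀ k, Integrable (fun x ↦ |u k x| ^ p) volume := fun k ↦
    (hbound k).2.1.mono' ((hu k).continuous.abs.rpow_const fun _ ↦ .inr hp0).aestronglyMeasurable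
      (.of_forall fun x ↦ by
        rw [Real.norm_of_nonneg (by positivity)]
        exact le_add_of_nonneg_right (by positivity))
  have hmass : ∀ k, ∫⁻ x, ‖u k x‖ₑ ^ p ≤ ENNReal.ofReal C := fun k ↦ by
    simp_rw [Real.enorm_eq_ofReal_abs, ENNReal.ofReal_rpow_of_nonneg (abs_nonneg _) hp0,
      ← ofReal_integral_eq_lintegral_ofReal (hint k) (.of_forall fun x ↦ by positivity)]
    refine ENNReal.ofReal_le_ofReal ((integral_mono (hint k) (hbound k).2.1 fun x ↦ ?_).trans
      (hbound k).2.2)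
    exact le_add_of_nonneg_right (by positivity)
  have huniform : TendstoUniformly u 0 atTop :=
    tendstoUniformly_zero_of_tendsto_iSup_setIntegral_rpow hu hp0 hr hint hvan
  exact tendsto_eLpNorm_zero_of_tendsto_eLpNorm_top
    (fun k ↦ (hu k).continuous.aestronglyMeasurable) hp0 hq ENNReal.ofReal_ne_top hmass
    huniform.tendsto_eLpNorm_top_zero

/-- Lions-type vanishing lemma for sequences of uniformly Lipschitz, uniformly
bounded functions in `W^{1,p}(ℝⁿ)` with spacelike gradients. -/
theorem vanishing_lemma
    (n : ℕ) (hn : 3 ≤ n) (p : ℝ) (hp : p ∈ Icc 2 (2 * (n : ℝ) / ((n : ℝ) - 2)))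
    (r : ℝ) (hr : 0 < r)
    (u : ℕ → EuclideanSpace ℝ (Fin n) → ℝ)
    -- each u_k is Lipschitz with |Du_k| ≤ 1 a.e.
    (hLip : ∀ k : ℕ, ∃ K : NNReal, LipschitzWith K (u k))
    (hgrad : ∀ k : ℕ, ∀ᵐ x : EuclideanSpace ℝ (Fin n), ‖gradient (u k) x‖ ≤ 1)
    -- uniform L^∞ and W^{1,p} bounds
    (C : ℝ)
    (hbound : ∀ k : ℕ,
      (∀ x : EuclideanSpace ℝ (Fin n), |u k x| ≤ C) ∧
      Integrable (fun x : EuclideanSpace ℝ (Fin n) =>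
        |u k x| ^ p + ‖gradient (u k) x‖ ^ p) volume ∧
      (∫ x : EuclideanSpace ℝ (Fin n),
        (|u k x| ^ p + ‖gradient (u k) x‖ ^ p)) ≤ C)
    -- vanishing of the local L^p masses, uniformly in the center
    (hvan : Tendsto (fun k : ℕ =>
        ⨆ y : EuclideanSpace ℝ (Fin n), ∫ x in Metric.ball y r, |u k x| ^ p)
      atTop (𝓝 0)) :
    -- then u_k → 0 in L^q(ℝⁿ) for every q ∈ (p, ∞)
    ∀ q : ℝ, p < q →
      Tendsto (fun k : ℕ => eLpNorm (u k) (ENNReal.ofReal q) volume) atTop (𝓝 0) :=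
  vanishing_lemma_general n p hp r hr u hLip hgrad C hbound hvan
end
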